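/- Let X and Y be metric spaces and f a multifunction from X to Y whose graph {(x,y) | y ∈ f x} is a compact subset of X × Y. If f is strongly continuous, then f is uniformly strongly continuous. -/
import Mathlib


/-- If a multifunction between metric spaces has compact graph and is strongly
continuous, then it is uniformly strongly continuous. -/
theorem strong_implies_uniformStrong_of_compactGraph {X Y : Type*}
    [MetricSpace X] [MetricSpace Y]
    (f : X → Set Y) (hgraph : IsCompact {p : X × Y | p.2 ∈ f p.1})
    (hsc : ∀ x, (f x).Nonempty → ∀ y ∈ f x, ∀ ε > (0:ℝ), ∃ δ > (0:ℝ),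
      ∀ x', (f x').Nonempty → dist x x' < δ → ∃ y' ∈ f x', dist y y' < ε) :
    ∀ ε > (0:ℝ), ∃ δ > (0:ℝ), ∀ x, (f x).Nonempty → ∀ y ∈ f x,
      ∀ x', (f x').Nonempty → dist x x' < δ → ∃ y' ∈ f x', dist y y' < ε := by
  intro ε hε
  set G := {p : X × Y | p.2 ∈ f p.1} with hG
  have key : ∀ p ∈ G, ∃ δ > (0:ℝ), ∀ x', (f x').Nonempty → dist p.1 x' < δ →
      ∃ y' ∈ f x', dist p.2 y' < ε / 2 := fun p hp =>
    hsc p.1 ⟨p.2, hp⟩ p.2 hp (ε / 2) (by linarith)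
  choose! δf hδf hf using key
  have hcov := hgraph.elim_nhds_subcover
    (fun p => Metric.ball p.1 (δf p / 2) ×ˢ Metric.ball p.2 (ε / 2)) ?_
  · obtain ⟨t, htG, hsub⟩ := hcov
    rcases t.eq_empty_or_nonempty with rfl | htne
    · refine ⟨1, one_pos, fun x hx y hy x' hx' hd => ?_⟩
      exact absurd (hsub (show (x, y) ∈ G from hy)) (by simp)
    · refine ⟨t.inf' htne (fun p => δf p / 2),
        (Finset.lt_inf'_iff htne).mpr fun p hp => by have := hδf p (htG p hp); linarith,
        fun x hx y hy x' hx' hd => ?_⟩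
      obtain ⟨p, hpt, hpball⟩ :=
        Set.mem_iUnion₂.mp (hsub (show (x, y) ∈ G from hy))
      have hpG : p ∈ G := htG p hpt
      have h1 : dist p.1 x < δf p / 2 := (by simpa [Metric.mem_ball, dist_comm] using hpball.1)
      have h2 : dist p.2 y < ε / 2 := (by simpa [Metric.mem_ball, dist_comm] using hpball.2)
      have hδle : t.inf' htne (fun p => δf p / 2) ≤ δf p / 2 :=
        Finset.inf'_le _ hpt
      have hdx : dist p.1 x' < δf p := by
        calc dist p.1 x' ≤ dist p.1 x + dist x x' := dist_triangle _ _ _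
        _ < δf p / 2 + δf p / 2 := by linarith
        _ = δf p := by ring
      obtain ⟨y', hy', hdy⟩ := hf p hpG x' hx' hdx
      refine ⟨y', hy', ?_⟩
      calc dist y y' ≤ dist y p.2 + dist p.2 y' := dist_triangle _ _ _
      _ < ε / 2 + ε / 2 := by
        have := dist_comm y p.2 ▸ h2; linarith [dist_comm y p.2 ▸ h2]
      _ = ε := by ring
  · intro p hp
    exact prod_mem_nhds (Metric.ball_mem_nhds _ (by linarith [hδf p hp]))
      (Metric.ball_mem_nhds _ (by linarith))
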